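/- arXiv:1610.00111 — 2 statements merged into one kernel-verified Lean document; each statement's English description precedes it below -/
import Mathlib

section
/- Let 𝓐 ⊆ B(H) be a unital operator algebra closed in the weak operator topology that possesses property (V), and let x, y ∈ H be unit vectors. Then there exists T ∈ 𝓐 with ‖T‖ ≤ 1 and Tx = y if and only if ‖(I−L)y‖ ≤ ‖(I−L)x‖ for every L ∈ Lat 𝓐. -/
noncomputable section

variable {H : Type*} [NormedAddCommGroup H] [InnerProductSpace ℂ H] [CompleteSpace H]

/-- An orthogonal projection: a self-adjoint idempotent bounded operator. -/
def IsOrthoProj (L : H →L[ℂ] H) : Prop := IsSelfAdjoint L ∧ L * L = L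

/-- The weak operator topology on `B(H)`. -/
def WOT (H : Type*) [NormedAddCommGroup H] [InnerProductSpace ℂ H] :
    TopologicalSpace (H →L[ℂ] H) :=
  TopologicalSpace.induced
    (fun T : H →L[ℂ] H => fun p : H × H => (inner ℂ (T p.1) p.2 : ℂ)) inferInstance

/-- `Lat 𝓐`: the invariant projection lattice of a set of operators. -/
def latOf (𝓐 : Set (H →L[ℂ] H)) : Set (H →L[ℂ] H) :=
  {L | IsOrthoProj L ∧ ∀ T ∈ 𝓐, (1 - L) * T * L = 0}

/-- `‖ω_{x,y}|_𝓐‖ = sup {|⟨Tx, y⟩| : T ∈ 𝓐, ‖T‖ ≤ 1}`. -/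
def omegaNorm (𝓐 : Set (H →L[ℂ] H)) (x y : H) : ℝ :=
  sSup {r : ℝ | ∃ T ∈ 𝓐, ‖T‖ ≤ 1 ∧ r = ‖(inner ℂ (T x) y : ℂ)‖}

/-- Property (V) of a set of operators. -/
def PropertyV (𝓐 : Set (H →L[ℂ] H)) : Prop :=
  ∀ x y : H,
    sInf {r : ℝ | ∃ L ∈ latOf 𝓐, r = ‖x - L x‖ ^ 2 + ‖L y‖ ^ 2} ≤ omegaNorm 𝓐 x y

/-!
Necessity is the compression identity `(1 - L) T = (1 - L) T (1 - L)` for `L ∈ Lat 𝓐`. For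
sufficiency, Pythagoras turns the hypothesis into `1 ≤ ‖ω_{x,y}|_𝓐‖` through property (V). The
unit ball of `𝓐` is compact in the weak operator topology, so the continuous function
`T ↦ re ⟪T x, y⟫` attains its maximum on it, and rotating phases shows that this maximum is at
least `1`. A contraction `S` with `re ⟪S x, y⟫ ≥ 1` maps the unit vector `x` to `y`.
-/

open Filter Topology InnerProductSpace
open scoped InnerProductSpace ComplexConjugate

lemma IsOrthoProj.isStarProjection {L : H →L[ℂ] H} (hL : IsOrthoProj L) : IsStarProjection L :=
  ⟨hL.2, hL.1⟩

lemma IsOrthoProj.norm_sub_apply_sq_add_norm_apply_sq {L : H →L[ℂ] H} (hL : IsOrthoProj L)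
    (z : H) : ‖z - L z‖ ^ 2 + ‖L z‖ ^ 2 = ‖z‖ ^ 2 := by
  obtain ⟨K, _, rfl⟩ := isStarProjection_iff_eq_starProjection.mp hL.isStarProjection
  rw [K.norm_sq_eq_add_norm_sq_starProjection z, ← K.starProjection_orthogonal_val, add_comm]

lemma zero_mem_latOf (S : Set (H →L[ℂ] H)) : 0 ∈ latOf S :=
  ⟨⟨.zero _, mul_zero 0⟩, fun _ _ => mul_zero _⟩

lemma norm_sub_apply_le_of_mem_latOf {S : Set (H →L[ℂ] H)} {L : H →L[ℂ] H} (hL : L ∈ latOf S)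
    {T : H →L[ℂ] H} (hT : T ∈ S) (hT1 : ‖T‖ ≤ 1) (z : H) :
    ‖T z - L (T z)‖ ≤ ‖z - L z‖ := by
  have hP : ‖1 - L‖ ≤ 1 := hL.1.isStarProjection.one_sub.norm_le
  have hcompress : (1 - L) * T = (1 - L) * T * (1 - L) := by
    rw [mul_sub, mul_one, hL.2 T hT, sub_zero]
  calc ‖T z - L (T z)‖ = ‖((1 - L) * T * (1 - L)) z‖ := by rw [← hcompress]; rfl
    _ = ‖((1 - L) * T) (z - L z)‖ := rfl
    _ ≤ ‖(1 - L) * T‖ * ‖z - L z‖ := ContinuousLinearMap.le_opNorm _ _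
    _ ≤ ‖z - L z‖ := by
        refine mul_le_of_le_one_left (norm_nonneg _) ((norm_mul_le _ _).trans ?_)
        exact mul_le_one₀ hP (norm_nonneg T) hT1

lemma sq_norm_le_sInf_latOf (S : Set (H →L[ℂ] H)) {x y : H}
    (h : ∀ L ∈ latOf S, ‖y - L y‖ ≤ ‖x - L x‖) :
    ‖y‖ ^ 2 ≤ sInf {r : ℝ | ∃ L ∈ latOf S, r = ‖x - L x‖ ^ 2 + ‖L y‖ ^ 2} := by
  refine le_csInf ⟨_, 0, zero_mem_latOf S, rfl⟩ ?_
  rintro _ ⟨L, hL, rfl⟩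
  rw [← hL.1.norm_sub_apply_sq_add_norm_apply_sq y]
  gcongr
  exact h L hL

lemma Complex.conj_div_norm_mul_self (c : ℂ) : conj (c / ‖c‖) * c = ‖c‖ := by
  rw [map_div₀, Complex.conj_ofReal, div_mul_eq_mul_div, Complex.conj_mul', sq,
    mul_self_div_self]

/-- Rotating the phase of `T` makes `⟪T x, y⟫` real and nonnegative. -/
lemma exists_re_inner_gt_of_lt_omegaNorm (𝓐 : Submodule ℂ (H →L[ℂ] H)) {x y : H} {r : ℝ}
    (hr : r < omegaNorm 𝓐 x y) : ∃ T ∈ 𝓐, ‖T‖ ≤ 1 ∧ r < RCLike.re ⟪T x, y⟫_ℂ := by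
  obtain ⟨_, ⟨T, hT, hT1, rfl⟩, hlt⟩ := exists_lt_of_lt_csSup
    (by exact ⟨_, 0, 𝓐.zero_mem, by simp, rfl⟩) hr
  set c := ⟪T x, y⟫_ℂ
  refine ⟨(c / ‖c‖) • T, 𝓐.smul_mem _ hT, ?_, ?_⟩
  · rw [norm_smul, norm_div, Complex.norm_real, norm_norm]
    exact mul_le_one₀ (div_self_le_one _) (norm_nonneg _) hT1
  · rwa [smul_apply, inner_smul_left, Complex.conj_div_norm_mul_self]

lemma eq_of_one_le_re_inner {𝕜 E : Type*} [RCLike 𝕜] [NormedAddCommGroup E]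
    [InnerProductSpace 𝕜 E] {u y : E} (hu : ‖u‖ ≤ 1) (hy : ‖y‖ ≤ 1)
    (h : 1 ≤ RCLike.re ⟪u, y⟫_𝕜) : u = y := by
  have hsq : ‖u - y‖ ^ 2 ≤ 0 := by
    rw [norm_sub_sq (𝕜 := 𝕜)]
    nlinarith [norm_nonneg u, norm_nonneg y]
  rw [← sub_eq_zero, ← norm_eq_zero]
  exact pow_eq_zero_iff two_ne_zero |>.mp (le_antisymm hsq (sq_nonneg _))

lemma continuous_inner_apply_wot {E : Type*} [NormedAddCommGroup E] [InnerProductSpace ℂ E]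
    (u v : E) : Continuous[WOT E, _] fun T : E →L[ℂ] E => ⟪T u, v⟫_ℂ :=
  letI := WOT E
  (continuous_apply (u, v)).comp
    (continuous_induced_dom (f := fun T : E →L[ℂ] E => fun p : E × E => ⟪T p.1, p.2⟫_ℂ))

theorem isCompact_closedBall_wot (r : ℝ) :
    @IsCompact _ (WOT H) (Metric.closedBall (0 : H →L[ℂ] H) r) := by
  rw [@isCompact_iff_ultrafilter_le_nhds _ (WOT H)]
  intro 𝒰 h𝒰
  have hball : ∀ᶠ T in (𝒰 : Filter (H →L[ℂ] H)), ‖T‖ ≤ r :=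
    mem_of_superset (le_principal_iff.mp h𝒰) fun T hT => mem_closedBall_zero_iff.mp hT
  have hr : 0 ≤ r := let ⟨T, hT⟩ := hball.exists; (norm_nonneg T).trans hT
  have hlim : ∀ u v : H, ∃ c ∈ Metric.closedBall (0 : ℂ) (r * ‖u‖ * ‖v‖),
      Tendsto (fun T : H →L[ℂ] H => ⟪T u, v⟫_ℂ) 𝒰 (𝓝 c) := by
    intro u v
    refine (isCompact_closedBall _ _).ultrafilter_le_nhds (𝒰.map _) ?_
    refine le_principal_iff.mpr (hball.mono fun T hT => mem_closedBall_zero_iff.mpr ?_)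
    calc ‖⟪T u, v⟫_ℂ‖ ≤ ‖T u‖ * ‖v‖ := norm_inner_le_norm _ _
      _ ≤ r * ‖u‖ * ‖v‖ := by gcongr; exact T.le_of_opNorm_le hT u
  choose c hc_bound hc using hlim
  -- The limits `c u v` of the matrix coefficients form a bounded sesquilinear form,
  -- which is represented by an operator.
  let B : H →L⋆[ℂ] H →L[ℂ] ℂ := LinearMap.mkContinuous₂
    (LinearMap.mk₂'ₛₗ (starRingEnd ℂ) (RingHom.id ℂ) c
      (fun u₁ u₂ v => tendsto_nhds_unique (hc (u₁ + u₂) v) <| by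
        simpa only [map_add, inner_add_left] using (hc u₁ v).add (hc u₂ v))
      (fun a u v => tendsto_nhds_unique (hc (a • u) v) <| by
        simpa only [map_smul, inner_smul_left, smul_eq_mul] using (hc u v).const_mul (conj a))
      (fun u v₁ v₂ => tendsto_nhds_unique (hc u (v₁ + v₂)) <| by
        simpa only [inner_add_right] using (hc u v₁).add (hc u v₂))
      (fun a u v => tendsto_nhds_unique (hc u (a • v)) <| by
        simpa only [inner_smul_right, smul_eq_mul, RingHom.id_apply] using (hc u v).const_mul a))
    r fun u v => mem_closedBall_zero_iff.mp (hc_bound u v)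
  refine ⟨continuousLinearMapOfBilin B, mem_closedBall_zero_iff.mpr ?_, ?_⟩
  · refine ContinuousLinearMap.opNorm_le_bound _ hr fun u => ?_
    calc ‖continuousLinearMapOfBilin B u‖ = ‖B u‖ :=
        (toDual ℂ H).symm.norm_map (B u)
      _ ≤ r * ‖u‖ := B.le_of_opNorm_le (LinearMap.mkContinuous₂_norm_le _ hr _) u
  · rw [WOT, nhds_induced, ← map_le_iff_le_comap]
    refine tendsto_pi_nhds.mpr fun p => ?_
    rw [continuousLinearMapOfBilin_apply]
    exact hc p.1 p.2

/-- For a WOT-closed unital operator algebra `𝓐` possessing property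
(V) and unit vectors `x, y ∈ H`, there exists a contraction `T ∈ 𝓐` with `T x = y` if
and only if `‖(I−L)y‖ ≤ ‖(I−L)x‖` for every `L ∈ Lat 𝓐`. -/
theorem norms_of_vector_functionals_stmt13
    (𝓐 : Subalgebra ℂ (H →L[ℂ] H))
    (hclosed : @IsClosed _ (WOT H) (𝓐 : Set (H →L[ℂ] H)))
    (hV : PropertyV (𝓐 : Set (H →L[ℂ] H)))
    (x y : H) (hx : ‖x‖ = 1) (hy : ‖y‖ = 1) :
    (∃ T ∈ 𝓐, ‖T‖ ≤ 1 ∧ T x = y) ↔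
      ∀ L ∈ latOf (𝓐 : Set (H →L[ℂ] H)), ‖y - L y‖ ≤ ‖x - L x‖ := by
  refine ⟨?_, fun h => ?_⟩
  · rintro ⟨T, hT, hT1, rfl⟩ L hL
    exact norm_sub_apply_le_of_mem_latOf hL hT hT1 x
  have hω : 1 ≤ omegaNorm 𝓐 x y := by
    simpa [hy] using (sq_norm_le_sInf_latOf _ h).trans (hV x y)
  let : TopologicalSpace (H →L[ℂ] H) := WOT H
  obtain ⟨S, ⟨hS, hSball⟩, hSmax⟩ :=
    ((isCompact_closedBall_wot 1).inter_left hclosed).exists_isMaxOn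
      ⟨0, 𝓐.zero_mem, Metric.mem_closedBall_self zero_le_one⟩
      (RCLike.continuous_re.comp (continuous_inner_apply_wot x y)).continuousOn
  have hS1 : ‖S‖ ≤ 1 := mem_closedBall_zero_iff.mp hSball
  have hre : 1 ≤ RCLike.re ⟪S x, y⟫_ℂ := by
    by_contra! hlt
    obtain ⟨T, hT, hT1, hgt⟩ :=
      exists_re_inner_gt_of_lt_omegaNorm 𝓐.toSubmodule (hlt.trans_le hω)
    exact (hSmax ⟨hT, mem_closedBall_zero_iff.mpr hT1⟩).not_gt hgt
  refine ⟨S, hS, hS1, eq_of_one_le_re_inner ?_ hy.le hre⟩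
  simpa [hx] using S.le_of_opNorm_le hS1 x
end
end

section
/- Let H₀ be a complex Hilbert space, B ∈ B(H₀) an invertible positive operator with 0 ≤ B ≤ I and ker(I−B) = {0}. Set a = √2/2, let S on H = H₀ ⊕ H₀ be S = [[B^{−1/2}, 0],[0, B^{1/2}]]·[[aI, −aI],[aI, aI]], and let 𝓑 = {C ⊕ D : C, D ∈ B(H₀)}. For x₁, x₂, y₁, y₂ ∈ H₀ put x = (x₁, x₂), y = (y₁, y₂), and define m₁ = a²‖B^{1/2}x₁+B^{−1/2}x₂‖² + a²‖B^{1/2}x₁−B^{−1/2}x₂‖², m₂ = a²‖B^{1/2}x₁+B^{−1/2}x₂‖² + a²‖B^{−1/2}y₁−B^{1/2}y₂‖², m₃ = a²‖B^{−1/2}y₁+B^{1/2}y₂‖² + a²‖B^{1/2}x₁−B^{−1/2}x₂‖², m₄ = a²‖B^{−1/2}y₁+B^{1/2}y₂‖² + a²‖B^{−1/2}y₁−B^{1/2}y₂‖². Then min{m₁, m₂, m₃, m₄} ≤ ‖ω_{S^{−1}x, S^{*}y}|_𝓑‖. -/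
noncomputable section

variable {H : Type*} [NormedAddCommGroup H] [InnerProductSpace ℂ H] [CompleteSpace H]

variable {H₀ : Type*} [NormedAddCommGroup H₀] [InnerProductSpace ℂ H₀] [CompleteSpace H₀]

/-- The operator on `H₀ ⊕ H₀ = WithLp 2 (H₀ × H₀)` given by the block matrix
`[[A, B], [C, D]]`. -/
def blk (A B C D : H₀ →L[ℂ] H₀) : WithLp 2 (H₀ × H₀) →L[ℂ] WithLp 2 (H₀ × H₀) :=
  (((WithLp.prodContinuousLinearEquiv 2 ℂ H₀ H₀).symm :
      H₀ × H₀ →L[ℂ] WithLp 2 (H₀ × H₀)) ∘L ((A.coprod B).prod (C.coprod D))) ∘L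
    ((WithLp.prodContinuousLinearEquiv 2 ℂ H₀ H₀) : WithLp 2 (H₀ × H₀) →L[ℂ] H₀ × H₀)

/-- The vector `(u, v) ∈ H₀ ⊕ H₀`. -/
def vec₂ (u v : H₀) : WithLp 2 (H₀ × H₀) := (WithLp.equiv 2 (H₀ × H₀)).symm (u, v)

/-!
With `a = √2/2` the second factor of `S` is unitary and `R`, `R⁻¹` are self-adjoint, so
`u = S⁻¹ x = a (R x₁ + R⁻¹ x₂, -(R x₁ - R⁻¹ x₂))` and
`v = S* y = a (R⁻¹ y₁ + R y₂, -(R⁻¹ y₁ - R y₂))`;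
the four `mₖ` are the sums of one of `‖u₁‖², ‖v₁‖²` with one of `‖u₂‖², ‖v₂‖²`.
Testing `ω_{u,v}` on the block-diagonal contraction whose entries are the rank-one partial
isometries `uᵢ ↦ vᵢ` gives `‖ω_{u,v}|_𝓑‖ ≥ ‖u₁‖ ‖v₁‖ + ‖u₂‖ ‖v₂‖`, which dominates the minimum
because `min (‖uᵢ‖², ‖vᵢ‖²) ≤ ‖uᵢ‖ ‖vᵢ‖`.
-/

open ContinuousLinearMap

theorem min_sq_add_sq_le_mul_add_mul {p q r s : ℝ} (hp : 0 ≤ p) (hq : 0 ≤ q) (hr : 0 ≤ r)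
    (hs : 0 ≤ s) :
    min (min (p ^ 2 + q ^ 2) (p ^ 2 + s ^ 2)) (min (r ^ 2 + q ^ 2) (r ^ 2 + s ^ 2)) ≤
      p * r + q * s := by
  rcases le_total p r with hpr | hpr <;> rcases le_total q s with hqs | hqs
  · exact (min_le_left _ _).trans <| (min_le_left _ _).trans (by nlinarith)
  · exact (min_le_left _ _).trans <| (min_le_right _ _).trans (by nlinarith)
  · exact (min_le_right _ _).trans <| (min_le_left _ _).trans (by nlinarith)
  · exact (min_le_right _ _).trans <| (min_le_right _ _).trans (by nlinarith)

theorem ring_inverse_eq_of_mul_eq_one {M₀ : Type*} [MonoidWithZero M₀] {x y : M₀}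
    (hxy : x * y = 1) (hyx : y * x = 1) : Ring.inverse x = y :=
  Ring.inverse_unit ⟨x, y, hxy, hyx⟩

theorem exists_norm_le_one_inner_apply_eq {𝕜 E : Type*} [RCLike 𝕜] [NormedAddCommGroup E]
    [InnerProductSpace 𝕜 E] (u v : E) :
    ∃ T : E →L[𝕜] E, ‖T‖ ≤ 1 ∧ inner 𝕜 (T u) v = ((‖u‖ * ‖v‖ : ℝ) : 𝕜) := by
  have normalize_le_one : ∀ w : E, ‖((‖w‖ : 𝕜)⁻¹ • w)‖ ≤ 1 := fun w => by
    rw [norm_smul, norm_inv, RCLike.norm_ofReal, abs_norm]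
    exact inv_mul_le_one_of_le₀ le_rfl (norm_nonneg w)
  refine ⟨InnerProductSpace.rankOne 𝕜 ((‖v‖ : 𝕜)⁻¹ • v) ((‖u‖ : 𝕜)⁻¹ • u), ?_, ?_⟩
  · rw [InnerProductSpace.norm_rankOne]
    exact mul_le_one₀ (normalize_le_one v) (norm_nonneg _) (normalize_le_one u)
  · have inner_normalize_self : ∀ w : E, inner 𝕜 ((‖w‖ : 𝕜)⁻¹ • w) w = (‖w‖ : 𝕜) := fun w => by
      rw [inner_smul_left, inner_self_eq_norm_sq_to_K, map_inv₀, RCLike.conj_ofReal, sq,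
        ← mul_assoc, inv_mul_mul_self]
    rw [InnerProductSpace.rankOne_apply, inner_smul_left, inner_normalize_self,
      inner_normalize_self, RCLike.conj_ofReal, RCLike.ofReal_mul]

theorem norm_inner_le_omegaNorm {E : Type*} [NormedAddCommGroup E] [InnerProductSpace ℂ E]
    {𝓐 : Set (E →L[ℂ] E)} {T : E →L[ℂ] E} (hT : T ∈ 𝓐)
    (hT₁ : ‖T‖ ≤ 1) (x y : E) : ‖(inner ℂ (T x) y : ℂ)‖ ≤ omegaNorm 𝓐 x y := by
  refine le_csSup ⟨‖x‖ * ‖y‖, ?_⟩ ⟨T, hT, hT₁, rfl⟩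
  rintro _ ⟨T', -, hT'₁, rfl⟩
  calc ‖(inner ℂ (T' x) y : ℂ)‖ ≤ ‖T' x‖ * ‖y‖ := norm_inner_le_norm _ _
    _ ≤ ‖x‖ * ‖y‖ := by gcongr; exact T'.le_of_opNorm_le hT'₁ x |>.trans_eq (one_mul _)

section Blocks

theorem vec₂_ofLp {E : Type*} (x : WithLp 2 (E × E)) : vec₂ x.ofLp.1 x.ofLp.2 = x := rfl

theorem norm_vec₂_sq {E : Type*} [NormedAddCommGroup E] (u v : E) :
    ‖vec₂ u v‖ ^ 2 = ‖u‖ ^ 2 + ‖v‖ ^ 2 :=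
  WithLp.prod_norm_sq_eq_of_L2 _

variable {E : Type*} [NormedAddCommGroup E] [InnerProductSpace ℂ E]

theorem blk_vec₂ (A B C D : E →L[ℂ] E) (u v : E) :
    blk A B C D (vec₂ u v) = vec₂ (A u + B v) (C u + D v) := rfl

theorem inner_vec₂ (u v u' v' : E) :
    (inner ℂ (vec₂ u v) (vec₂ u' v') : ℂ) = inner ℂ u u' + inner ℂ v v' :=
  WithLp.prod_inner_apply _ _

theorem blk_mul (A B C D A' B' C' D' : E →L[ℂ] E) :
    blk A B C D * blk A' B' C' D' =
      blk (A * A' + B * C') (A * B' + B * D') (C * A' + D * C') (C * B' + D * D') := by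
  ext x
  rw [← vec₂_ofLp x]
  simp only [mul_apply_eq_comp, blk_vec₂]
  congr 1 <;> simp only [map_add, add_apply, mul_apply_eq_comp] <;> abel

theorem blk_one : blk (1 : E →L[ℂ] E) 0 0 1 = 1 := by
  ext x
  rw [← vec₂_ofLp x, blk_vec₂]
  simp

theorem adjoint_blk [CompleteSpace E] (A B C D : E →L[ℂ] E) :
    adjoint (blk A B C D) = blk (adjoint A) (adjoint C) (adjoint B) (adjoint D) := by
  refine ((eq_adjoint_iff _ _).mpr fun x y => ?_).symm
  rw [← vec₂_ofLp x, ← vec₂_ofLp y]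
  simp only [blk_vec₂, inner_vec₂, inner_add_left, inner_add_right, adjoint_inner_left]
  ring

theorem norm_blk_diag_le (C D : E →L[ℂ] E) : ‖blk C 0 0 D‖ ≤ max ‖C‖ ‖D‖ := by
  refine opNorm_le_bound _ (le_max_of_le_left (norm_nonneg C)) fun z => ?_
  rw [← vec₂_ofLp z, blk_vec₂]
  set u := z.ofLp.1
  set v := z.ofLp.2
  have hu : ‖C u‖ ≤ max ‖C‖ ‖D‖ * ‖u‖ :=
    (C.le_opNorm u).trans (by gcongr; exact le_max_left _ _)
  have hv : ‖D v‖ ≤ max ‖C‖ ‖D‖ * ‖v‖ :=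
    (D.le_opNorm v).trans (by gcongr; exact le_max_right _ _)
  refine pow_le_pow_iff_left₀ (norm_nonneg _) (by positivity) two_ne_zero |>.mp ?_
  simp only [zero_apply, add_zero, zero_add, mul_pow, norm_vec₂_sq]
  nlinarith [norm_nonneg (C u), norm_nonneg (D v)]

theorem mul_add_mul_le_omegaNorm_blk_diag (u₁ u₂ v₁ v₂ : E) :
    ‖u₁‖ * ‖v₁‖ + ‖u₂‖ * ‖v₂‖ ≤
      omegaNorm {T : WithLp 2 (E × E) →L[ℂ] WithLp 2 (E × E) | ∃ C D, T = blk C 0 0 D}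
        (vec₂ u₁ u₂) (vec₂ v₁ v₂) := by
  obtain ⟨C, hC, hCu⟩ := exists_norm_le_one_inner_apply_eq (𝕜 := ℂ) u₁ v₁
  obtain ⟨D, hD, hDu⟩ := exists_norm_le_one_inner_apply_eq (𝕜 := ℂ) u₂ v₂
  have hT : ‖blk C 0 0 D‖ ≤ 1 := (norm_blk_diag_le C D).trans (max_le hC hD)
  refine le_of_eq_of_le ?_ (norm_inner_le_omegaNorm (by exact ⟨C, D, rfl⟩) hT _ _)
  simp only [blk_vec₂, zero_apply, add_zero, zero_add, inner_vec₂, hCu, hDu]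
  rw [← RCLike.ofReal_add, RCLike.norm_ofReal, abs_of_nonneg (by positivity)]

end Blocks

section Rotation

variable {E : Type*} [NormedAddCommGroup E] [InnerProductSpace ℂ E] {R Rinv : E →L[ℂ] E} {a : ℝ}

theorem blk_diag_mul_blk_rotation :
    blk Rinv 0 0 R * blk (a • 1) (-(a • 1)) (a • 1) (a • 1) =
      blk (a • Rinv) (-(a • Rinv)) (a • R) (a • R) := by
  rw [blk_mul]
  congr 1 <;> simp

theorem ring_inverse_blk_rotation (hRRinv : R * Rinv = 1) (hRinvR : Rinv * R = 1)
    (ha : a ^ 2 + a ^ 2 = 1) :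
    Ring.inverse (blk (a • Rinv) (-(a • Rinv)) (a • R) (a • R)) =
      blk (a • R) (a • Rinv) (-(a • R)) (a • Rinv) := by
  refine ring_inverse_eq_of_mul_eq_one ?_ ?_ <;>
    · rw [blk_mul, ← blk_one]
      congr 1 <;> simp only [smul_mul_smul_comm, neg_mul, mul_neg, neg_neg, hRRinv, hRinvR,
        ← add_smul, ← sq, ha, one_smul, add_neg_cancel, neg_add_cancel]

theorem adjoint_blk_rotation [CompleteSpace E] (hR : IsSelfAdjoint R)
    (hRinv : IsSelfAdjoint Rinv) :
    adjoint (blk (a • Rinv) (-(a • Rinv)) (a • R) (a • R)) =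
      blk (a • Rinv) (a • R) (-(a • Rinv)) (a • R) := by
  have haR := (IsSelfAdjoint.all a).smul hR
  have haRinv := (IsSelfAdjoint.all a).smul hRinv
  rw [adjoint_blk, haR.adjoint_eq, haRinv.neg.adjoint_eq, haRinv.adjoint_eq]

end Rotation

theorem norms_of_vector_functionals_stmt15_general
    (R Rinv : H₀ →L[ℂ] H₀) (hRpos : R.IsPositive)
    (hRRinv : R * Rinv = 1) (hRinvR : Rinv * R = 1)
    (x₁ x₂ y₁ y₂ : H₀) :
    let a : ℝ := Real.sqrt 2 / 2
    let S : WithLp 2 (H₀ × H₀) →L[ℂ] WithLp 2 (H₀ × H₀) :=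
      blk Rinv 0 0 R * blk (a • 1) (-(a • 1)) (a • 1) (a • 1)
    let m₁ := a ^ 2 * ‖R x₁ + Rinv x₂‖ ^ 2 + a ^ 2 * ‖R x₁ - Rinv x₂‖ ^ 2
    let m₂ := a ^ 2 * ‖R x₁ + Rinv x₂‖ ^ 2 + a ^ 2 * ‖Rinv y₁ - R y₂‖ ^ 2
    let m₃ := a ^ 2 * ‖Rinv y₁ + R y₂‖ ^ 2 + a ^ 2 * ‖R x₁ - Rinv x₂‖ ^ 2
    let m₄ := a ^ 2 * ‖Rinv y₁ + R y₂‖ ^ 2 + a ^ 2 * ‖Rinv y₁ - R y₂‖ ^ 2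
    min (min m₁ m₂) (min m₃ m₄) ≤
      omegaNorm {T : WithLp 2 (H₀ × H₀) →L[ℂ] WithLp 2 (H₀ × H₀) | ∃ C D, T = blk C 0 0 D}
        (Ring.inverse S (vec₂ x₁ x₂))
        (ContinuousLinearMap.adjoint S (vec₂ y₁ y₂)) := by
  intro a S m₁ m₂ m₃ m₄
  have ha : a ^ 2 + a ^ 2 = 1 := by
    rw [div_pow, Real.sq_sqrt zero_le_two]
    norm_num
  have hR : IsSelfAdjoint R := hRpos.isSelfAdjoint
  have hRinv : IsSelfAdjoint Rinv :=
    ring_inverse_eq_of_mul_eq_one hRRinv hRinvR ▸ hR.ringInverse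
  have hS : S = blk (a • Rinv) (-(a • Rinv)) (a • R) (a • R) := blk_diag_mul_blk_rotation
  have hx : Ring.inverse S (vec₂ x₁ x₂) =
      vec₂ (a • (R x₁ + Rinv x₂)) (-(a • (R x₁ - Rinv x₂))) := by
    rw [hS, ring_inverse_blk_rotation hRRinv hRinvR ha, blk_vec₂]
    congr 1 <;> simp only [smul_apply, neg_apply] <;> module
  have hy : adjoint S (vec₂ y₁ y₂) =
      vec₂ (a • (Rinv y₁ + R y₂)) (-(a • (Rinv y₁ - R y₂))) := by
    rw [hS, adjoint_blk_rotation hR hRinv, blk_vec₂]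
    congr 1 <;> simp only [smul_apply, neg_apply] <;> module
  rw [hx, hy]
  refine le_trans ?_ (mul_add_mul_le_omegaNorm_blk_diag _ _ _ _)
  simpa only [norm_neg, norm_smul, mul_pow, Real.norm_eq_abs, sq_abs] using
    min_sq_add_sq_le_mul_add_mul (norm_nonneg (a • (R x₁ + Rinv x₂)))
      (norm_nonneg (a • (R x₁ - Rinv x₂))) (norm_nonneg (a • (Rinv y₁ + R y₂)))
      (norm_nonneg (a • (Rinv y₁ - R y₂)))

/-- With `B` an invertible positive contraction with `ker (I−B) = {0}`,
`R = B^{1/2}`, `Rinv = B^{−1/2}`, `a = √2/2`,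
`S = [[B^{−1/2}, 0], [0, B^{1/2}]] · [[aI, −aI], [aI, aI]]` and `𝓑` the block-diagonal
algebra, one has `min {m₁, m₂, m₃, m₄} ≤ ‖ω_{S⁻¹x, S*y}|_𝓑‖`. -/
theorem norms_of_vector_functionals_stmt15
    (B : H₀ →L[ℂ] H₀) (hBpos : B.IsPositive) (hB1 : ((1 : H₀ →L[ℂ] H₀) - B).IsPositive)
    (hBunit : IsUnit B) (hBker : LinearMap.ker (((1 : H₀ →L[ℂ] H₀) - B : H₀ →L[ℂ] H₀) : H₀ →ₗ[ℂ] H₀) = ⊥)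
    (R Rinv : H₀ →L[ℂ] H₀) (hRpos : R.IsPositive) (hRsq : R * R = B)
    (hRRinv : R * Rinv = 1) (hRinvR : Rinv * R = 1)
    (x₁ x₂ y₁ y₂ : H₀) :
    let a : ℝ := Real.sqrt 2 / 2
    let S : WithLp 2 (H₀ × H₀) →L[ℂ] WithLp 2 (H₀ × H₀) :=
      blk Rinv 0 0 R * blk (a • 1) (-(a • 1)) (a • 1) (a • 1)
    let m₁ := a ^ 2 * ‖R x₁ + Rinv x₂‖ ^ 2 + a ^ 2 * ‖R x₁ - Rinv x₂‖ ^ 2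
    let m₂ := a ^ 2 * ‖R x₁ + Rinv x₂‖ ^ 2 + a ^ 2 * ‖Rinv y₁ - R y₂‖ ^ 2
    let m₃ := a ^ 2 * ‖Rinv y₁ + R y₂‖ ^ 2 + a ^ 2 * ‖R x₁ - Rinv x₂‖ ^ 2
    let m₄ := a ^ 2 * ‖Rinv y₁ + R y₂‖ ^ 2 + a ^ 2 * ‖Rinv y₁ - R y₂‖ ^ 2
    min (min m₁ m₂) (min m₃ m₄) ≤
      omegaNorm {T : WithLp 2 (H₀ × H₀) →L[ℂ] WithLp 2 (H₀ × H₀) | ∃ C D, T = blk C 0 0 D}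
        (Ring.inverse S (vec₂ x₁ x₂))
        (ContinuousLinearMap.adjoint S (vec₂ y₁ y₂)) :=
  norms_of_vector_functionals_stmt15_general R Rinv hRpos hRRinv hRinvR x₁ x₂ y₁ y₂
end
end
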